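/- arXiv:1509.05877 — 5 statements merged into one kernel-verified Lean document; each statement's English description precedes it below -/
import Mathlib

section
/- If Y given X = x has Binomial(N', f(x)) distribution, then the symmetrized KL divergence between the joint distribution P(x,y) and the product P(x)P(y) equals N' · Cov(f(X), log(f(X)/(1−f(X)))). -/
/-!
For an exponential family `log P(y|x) = c(y) + θ(x) T(y) + A(x)`, the symmetrized divergence
`E_{P(x,y)} log P(y|x) − E_{P(x)P(y)} log P(y|x)` only sees the interaction term `θ(x) T(y)`: the
terms `c(y)` and `A(x)` have the same expectation under the joint law and under the product of its
marginals. The interaction term contributes `Cov(θ(X), E[T(Y) | X])`. The binomial law is such a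
family with `T(y) = y`, natural parameter `θ = log (p / (1 - p))` and `E[Y | X] = N' f(X)`.
-/

open Finset Real

theorem sum_sub_marginal_mul_eq_cov_of_exponential_family {ι β : Type*} [Fintype ι]
    (s : Finset β) (px : ι → ℝ) (hsum : ∑ i, px i = 1) (b L : ι → β → ℝ)
    (hb : ∀ i, ∑ y ∈ s, b i y = 1) (c T : β → ℝ) (θ A m : ι → ℝ)
    (hL : ∀ i, ∀ y ∈ s, L i y = c y + T y * θ i + A i)
    (hm : ∀ i, ∑ y ∈ s, T y * b i y = m i) :
    ∑ i, ∑ y ∈ s, (px i * b i y - px i * ∑ j, px j * b j y) * L i y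
      = ∑ i, px i * (θ i * m i) - (∑ i, px i * m i) * ∑ i, px i * θ i := by
  have sum_mul_marginal (g : β → ℝ) :
      ∑ y ∈ s, g y * ∑ j, px j * b j y = ∑ j, px j * ∑ y ∈ s, g y * b j y := by
    simp only [mul_sum]
    rw [sum_comm]
    exact sum_congr rfl fun j _ => sum_congr rfl fun y _ => by ring
  have marginal_total : ∑ y ∈ s, ∑ j, px j * b j y = 1 := by
    simpa [hb, hsum] using sum_mul_marginal 1
  have marginal_mean : ∑ y ∈ s, T y * ∑ j, px j * b j y = ∑ j, px j * m j := by
    simp only [sum_mul_marginal, hm]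
  have c_term_eq_zero : ∑ i, ∑ y ∈ s, (px i * b i y - px i * ∑ j, px j * b j y) * c y = 0 := by
    rw [sum_comm]
    refine sum_eq_zero fun y _ => ?_
    rw [← sum_mul, sum_sub_distrib, ← sum_mul, hsum, one_mul, sub_self, zero_mul]
  have inner_sum_eq : ∀ i, ∑ y ∈ s, (px i * b i y - px i * ∑ j, px j * b j y) * L i y
      = ∑ y ∈ s, (px i * b i y - px i * ∑ j, px j * b j y) * c y
        + px i * θ i * (m i - ∑ j, px j * m j) := by
    intro i
    have expand : ∀ y ∈ s, (px i * b i y - px i * ∑ j, px j * b j y) * L i y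
        = (px i * b i y - px i * ∑ j, px j * b j y) * c y
          + px i * θ i * (T y * b i y - T y * ∑ j, px j * b j y)
          + px i * A i * (b i y - ∑ j, px j * b j y) := fun y hy => by
      rw [hL i y hy]; ring
    rw [sum_congr rfl expand, sum_add_distrib, sum_add_distrib, ← mul_sum, ← mul_sum,
      sum_sub_distrib, sum_sub_distrib, hm, marginal_mean, hb, marginal_total]
    ring
  rw [sum_congr rfl fun i _ => inner_sum_eq i, sum_add_distrib, c_term_eq_zero, zero_add]
  simp only [mul_sub, sum_sub_distrib, ← sum_mul]
  rw [mul_comm (∑ i, px i * m i)]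
  congr 1
  exact sum_congr rfl fun i _ => by ring

theorem log_choose_mul_pow_mul_one_sub_pow {p : ℝ} (hp : p ∈ Set.Ioo 0 1) {n y : ℕ}
    (hy : y ≤ n) :
    log (n.choose y * p ^ y * (1 - p) ^ (n - y))
      = log (n.choose y) + y * log (p / (1 - p)) + n * log (1 - p) := by
  have hp0 : 0 < p := hp.1
  have hq0 : 0 < 1 - p := sub_pos.mpr hp.2
  have hchoose : (0 : ℝ) < n.choose y := by exact_mod_cast Nat.choose_pos hy
  rw [log_mul (by positivity) (by positivity), log_mul hchoose.ne' (by positivity), log_pow,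
    log_pow, log_div hp0.ne' hq0.ne', Nat.cast_sub hy]
  ring

theorem sum_choose_mul_pow_mul_one_sub_pow (n : ℕ) (p : ℝ) :
    ∑ y ∈ range (n + 1), (n.choose y : ℝ) * p ^ y * (1 - p) ^ (n - y) = 1 := by
  simpa [bernsteinPolynomial, Polynomial.eval_finsetSum] using
    congrArg (Polynomial.eval p) (bernsteinPolynomial.sum ℝ n)

theorem sum_mul_choose_mul_pow_mul_one_sub_pow (n : ℕ) (p : ℝ) :
    ∑ y ∈ range (n + 1), (y : ℝ) * ((n.choose y : ℝ) * p ^ y * (1 - p) ^ (n - y)) = n * p := by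
  simpa [bernsteinPolynomial, Polynomial.eval_finsetSum] using
    congrArg (Polynomial.eval p) (bernsteinPolynomial.sum_smul ℝ n)

theorem stmt_1_general {ι : Type*} [Fintype ι] (N : ℕ)
    (px : ι → ℝ) (hsum : ∑ i, px i = 1)
    (f : ι → ℝ) (hf : ∀ i, f i ∈ Set.Ioo (0:ℝ) 1) :
    let b : ι → ℕ → ℝ := fun i y => (N.choose y : ℝ) * f i ^ y * (1 - f i) ^ (N - y)
    let py : ℕ → ℝ := fun y => ∑ i, px i * b i y
    let h : ι → ℝ := fun i => Real.log (f i / (1 - f i))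
    (∑ i, ∑ y ∈ Finset.range (N + 1),
        (px i * b i y - px i * py y) * Real.log (b i y))
      = (N : ℝ) * ((∑ i, px i * (f i * h i))
          - (∑ i, px i * f i) * (∑ i, px i * h i)) := by
  intro b py h
  refine (sum_sub_marginal_mul_eq_cov_of_exponential_family (range (N + 1)) px hsum b
    (fun i y => log (b i y)) (fun i => sum_choose_mul_pow_mul_one_sub_pow N (f i))
    (fun y => log (N.choose y)) (fun y => y) h (fun i => N * log (1 - f i)) (fun i => N * f i)
    (fun i y hy => log_choose_mul_pow_mul_one_sub_pow (hf i) (mem_range_succ_iff.mp hy))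
    (fun i => sum_mul_choose_mul_pow_mul_one_sub_pow N (f i))).trans ?_
  have scale (g : ι → ℝ) : ∑ i, px i * (N * g i) = N * ∑ i, px i * g i := by
    rw [mul_sum]; exact sum_congr rfl fun i _ => by ring
  simp only [mul_left_comm (h _), scale, mul_comm (h _)]
  ring

/-- For a Binomial channel `Y | X = x ~ Binomial(N, f(x))` with discrete input `X`
distributed according to `px`, the symmetrized KL divergence between the joint
distribution `P(x,y)` and the product of marginals `P(x)P(y)`, which equals
`E_{P(x,y)} log P(y|x) − E_{P(x)P(y)} log P(y|x)`, is exactly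
`N · Cov(f(X), log(f(X)/(1−f(X))))`. -/
theorem stmt_1 {ι : Type*} [Fintype ι] (N : ℕ) (hN : 0 < N)
    (px : ι → ℝ) (hpx : ∀ i, 0 ≤ px i) (hsum : ∑ i, px i = 1)
    (f : ι → ℝ) (hf : ∀ i, f i ∈ Set.Ioo (0:ℝ) 1) :
    let b : ι → ℕ → ℝ := fun i y => (N.choose y : ℝ) * f i ^ y * (1 - f i) ^ (N - y)
    let py : ℕ → ℝ := fun y => ∑ i, px i * b i y
    let h : ι → ℝ := fun i => Real.log (f i / (1 - f i))
    (∑ i, ∑ y ∈ Finset.range (N + 1),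
        (px i * b i y - px i * py y) * Real.log (b i y))
      = (N : ℝ) * ((∑ i, px i * (f i * h i))
          - (∑ i, px i * f i) * (∑ i, px i * h i)) :=
  stmt_1_general N px hsum f hf
end

section
/- For a Binomial channel where Y given X=x is Binomial(N', f(x)) with f increasing, the mutual information I(X;Y) is at most N' · Cov(f(X), log(f(X)/(1−f(X)))). -/
/-!
Adding the reverse divergence `D(P_X P_Y ‖ P_XY) ≥ 0` to `I(X;Y) = D(P_XY ‖ P_X P_Y)` gives the
symmetrized divergence `∑ p(x) (P(y|x) - P(y)) log (P(y|x) / P(y))`. The binomial channel is an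
exponential family, `log P(y|x) = y · logit f(x) + N log (1 - f(x)) + log (N choose y)`, and in the
symmetrized divergence every term not coupling `x` and `y` cancels against a marginal. What is
left is `∑ p(x) logit f(x) (E[Y|x] - E[Y])`, the covariance of `E[Y|X] = N f(X)` and `logit f(X)`.
-/

open Finset Real Polynomial

section Binomial

variable (n : ℕ) (p : ℝ)

lemma sum_range_choose_mul_pow_mul_pow :
    ∑ ν ∈ range (n + 1), (n.choose ν : ℝ) * p ^ ν * (1 - p) ^ (n - ν) = 1 := by
  simpa [bernsteinPolynomial, eval_finsetSum] using
    congrArg (eval p) (bernsteinPolynomial.sum ℝ n)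

lemma sum_range_mul_choose_mul_pow_mul_pow :
    ∑ ν ∈ range (n + 1), (ν : ℝ) * ((n.choose ν : ℝ) * p ^ ν * (1 - p) ^ (n - ν)) = n * p := by
  simpa [bernsteinPolynomial, eval_finsetSum] using
    congrArg (eval p) (bernsteinPolynomial.sum_smul ℝ n)

variable {n p}

lemma choose_mul_pow_mul_pow_pos {ν : ℕ} (hν : ν ≤ n) (hp0 : 0 < p) (hp1 : p < 1) :
    0 < (n.choose ν : ℝ) * p ^ ν * (1 - p) ^ (n - ν) := by
  have := Nat.choose_pos hν
  have : 0 < 1 - p := by linarith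
  positivity

lemma log_choose_mul_pow_mul_pow {ν : ℕ} (hν : ν ≤ n) (hp0 : 0 < p) (hp1 : p < 1) :
    log ((n.choose ν : ℝ) * p ^ ν * (1 - p) ^ (n - ν))
      = log (p / (1 - p)) * ν + n * log (1 - p) + log (n.choose ν) := by
  have hc : (n.choose ν : ℝ) ≠ 0 := by exact_mod_cast (Nat.choose_pos hν).ne'
  have hq : 1 - p ≠ 0 := by linarith
  rw [log_mul (by positivity) (pow_ne_zero _ hq), log_mul hc (by positivity), log_pow, log_pow,
    log_div hp0.ne' hq, Nat.cast_sub hν]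
  ring

end Binomial

lemma mul_log_div_le_sub_mul_log_div_add_sub {a c : ℝ} (ha : 0 < a) (hc : 0 ≤ c) :
    a * log (a / c) ≤ (a - c) * log (a / c) + (a - c) := by
  rcases hc.eq_or_lt with rfl | hc
  · simp [ha.le]
  have := log_le_sub_one_of_pos (div_pos ha hc)
  have : c * log (a / c) ≤ c * (a / c - 1) := mul_le_mul_of_nonneg_left this hc.le
  rw [mul_sub, mul_div_cancel₀ _ hc.ne', mul_one] at this
  linarith

lemma sum_mul_mul_add {β : Type*} (s : Finset β) (w T : β → ℝ) (a c : ℝ) :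
    ∑ y ∈ s, w y * (a * T y + c) = a * ∑ y ∈ s, T y * w y + c * ∑ y ∈ s, w y := by
  simp only [mul_add, sum_add_distrib, mul_sum]
  congr 1 <;> refine sum_congr rfl fun y _ => by ring

section Channel

variable {ι β : Type*} [Fintype ι] {s : Finset β} {px : ι → ℝ} {b : ι → β → ℝ}

def outputDist (px : ι → ℝ) (b : ι → β → ℝ) (y : β) : ℝ := ∑ i, px i * b i y

lemma outputDist_nonneg (hpx : ∀ i, 0 ≤ px i) {y : β} (hb : ∀ i, 0 ≤ b i y) :
    0 ≤ outputDist px b y :=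
  sum_nonneg fun i _ => mul_nonneg (hpx i) (hb i)

lemma outputDist_pos (hpx : ∀ i, 0 ≤ px i) (hsum : ∑ i, px i = 1) {y : β}
    (hb : ∀ i, 0 < b i y) : 0 < outputDist px b y := by
  obtain ⟨i, -, hi⟩ : ∃ i ∈ univ, 0 < px i :=
    exists_lt_of_sum_lt (by simp [hsum])
  exact sum_pos' (fun j _ => mul_nonneg (hpx j) (hb j).le) ⟨i, mem_univ i, mul_pos hi (hb i)⟩

lemma sum_outputDist_mul (T : β → ℝ) :
    ∑ y ∈ s, T y * outputDist px b y = ∑ i, px i * ∑ y ∈ s, T y * b i y := by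
  simp only [outputDist, mul_sum]
  rw [sum_comm]
  exact sum_congr rfl fun i _ => sum_congr rfl fun y _ => by ring

lemma sum_outputDist (hsum : ∑ i, px i = 1) (hb1 : ∀ i, ∑ y ∈ s, b i y = 1) :
    ∑ y ∈ s, outputDist px b y = 1 := by
  simpa [hb1, hsum] using sum_outputDist_mul (s := s) (px := px) (b := b) 1

lemma sum_mul_sub_outputDist (hsum : ∑ i, px i = 1) (y : β) :
    ∑ i, px i * (b i y - outputDist px b y) = 0 := by
  simp only [mul_sub, sum_sub_distrib, ← sum_mul, hsum, one_mul]
  exact sub_self _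

variable (hpx : ∀ i, 0 ≤ px i) (hsum : ∑ i, px i = 1) (hb : ∀ i, ∀ y ∈ s, 0 < b i y)
  (hb1 : ∀ i, ∑ y ∈ s, b i y = 1)
include hpx hsum hb hb1

-- The gap is the reverse divergence, bounded through `log t ≤ t - 1`.
lemma sum_sum_mul_log_div_outputDist_le :
    ∑ i, ∑ y ∈ s, px i * b i y * log (b i y / outputDist px b y)
      ≤ ∑ i, ∑ y ∈ s, px i * (b i y - outputDist px b y) * log (b i y / outputDist px b y) := by
  have hq1 := sum_outputDist hsum hb1
  calc _ ≤ ∑ i, ∑ y ∈ s, px i * ((b i y - outputDist px b y) * log (b i y / outputDist px b y)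
          + (b i y - outputDist px b y)) := by
        refine sum_le_sum fun i _ => sum_le_sum fun y hy => ?_
        rw [mul_assoc]
        exact mul_le_mul_of_nonneg_left (mul_log_div_le_sub_mul_log_div_add_sub (hb i y hy)
          (outputDist_nonneg hpx fun j => (hb j y hy).le)) (hpx i)
    _ = _ := by
        simp only [mul_add, sum_add_distrib, ← mul_sum, sum_sub_distrib, hb1, hq1, sub_self,
          mul_zero, add_zero, mul_assoc]

lemma sum_sum_mul_sub_outputDist_mul_log_div_eq (θ A m : ι → ℝ) (T C : β → ℝ)
    (hlog : ∀ i, ∀ y ∈ s, log (b i y) = θ i * T y + A i + C y)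
    (hm : ∀ i, ∑ y ∈ s, T y * b i y = m i) :
    ∑ i, ∑ y ∈ s, px i * (b i y - outputDist px b y) * log (b i y / outputDist px b y)
      = ∑ i, px i * (m i * θ i) - (∑ i, px i * m i) * ∑ i, px i * θ i := by
  set q := outputDist px b
  have hq : ∀ y ∈ s, 0 < q y := fun y hy => outputDist_pos hpx hsum fun i => hb i y hy
  have hq1 : ∑ y ∈ s, q y = 1 := sum_outputDist hsum hb1
  have hqT : ∑ y ∈ s, T y * q y = ∑ i, px i * m i := by
    simp only [q, sum_outputDist_mul, hm]
  have hinner : ∀ i, ∑ y ∈ s, (b i y - q y) * (θ i * T y + A i)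
      = θ i * (m i - ∑ j, px j * m j) := by
    intro i
    simp only [sub_mul, sum_sub_distrib, sum_mul_mul_add, hm, hb1, hq1, hqT]
    ring
  have hcross : ∑ i, ∑ y ∈ s, px i * (b i y - q y) * (C y - log (q y)) = 0 := by
    rw [sum_comm]
    refine sum_eq_zero fun y _ => ?_
    rw [← sum_mul, sum_mul_sub_outputDist hsum, zero_mul]
  calc _ = ∑ i, ∑ y ∈ s, (px i * ((b i y - q y) * (θ i * T y + A i))
          + px i * (b i y - q y) * (C y - log (q y))) := by
        refine sum_congr rfl fun i _ => sum_congr rfl fun y hy => ?_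
        rw [log_div (hb i y hy).ne' (hq y hy).ne', hlog i y hy]
        ring
    _ = ∑ i, px i * (θ i * (m i - ∑ j, px j * m j)) := by
        simp only [sum_add_distrib, hcross, add_zero, ← mul_sum, hinner]
    _ = _ := by
        simp only [mul_sub, sum_sub_distrib, ← mul_assoc, ← sum_mul]
        rw [mul_comm (∑ i, px i * θ i)]
        congr 1
        exact sum_congr rfl fun i _ => by ring

end Channel

theorem stmt_2_general {ι : Type*} [Fintype ι] (N : ℕ)
    (px : ι → ℝ) (hpx : ∀ i, 0 ≤ px i) (hsum : ∑ i, px i = 1)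
    (x : ι → ℝ) (f : ℝ → ℝ)
    (hf01 : ∀ t, f t ∈ Set.Ioo (0:ℝ) 1) :
    let b : ι → ℕ → ℝ := fun i y =>
      (N.choose y : ℝ) * f (x i) ^ y * (1 - f (x i)) ^ (N - y)
    let py : ℕ → ℝ := fun y => ∑ i, px i * b i y
    let h : ι → ℝ := fun i => Real.log (f (x i) / (1 - f (x i)))
    (∑ i, ∑ y ∈ Finset.range (N + 1), px i * b i y * Real.log (b i y / py y))
      ≤ (N : ℝ) * ((∑ i, px i * (f (x i) * h i))
          - (∑ i, px i * f (x i)) * (∑ i, px i * h i)) := by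
  intro b py h
  have hb : ∀ i, ∀ y ∈ range (N + 1), 0 < b i y := fun i y hy =>
    choose_mul_pow_mul_pow_pos (mem_range_succ_iff.mp hy) (hf01 _).1 (hf01 _).2
  have hb1 : ∀ i, ∑ y ∈ range (N + 1), b i y = 1 := fun i =>
    sum_range_choose_mul_pow_mul_pow N _
  calc _ ≤ _ := sum_sum_mul_log_div_outputDist_le hpx hsum hb hb1
    _ = ∑ i, px i * (N * f (x i) * h i) - (∑ i, px i * (N * f (x i))) * ∑ i, px i * h i :=
        sum_sum_mul_sub_outputDist_mul_log_div_eq hpx hsum hb hb1 h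
          (fun i => N * log (1 - f (x i))) _ (fun y => y) (fun y => log (N.choose y))
          (fun i y hy => log_choose_mul_pow_mul_pow (mem_range_succ_iff.mp hy) (hf01 _).1
            (hf01 _).2)
          (fun i => sum_range_mul_choose_mul_pow_mul_pow N _)
    _ = _ := by
        simp only [mul_assoc, mul_left_comm _ (N : ℝ), ← mul_sum]
        ring

/-- For a Binomial channel `Y | X = x ~ Binomial(N, f(x))` with `f` increasing and a
finitely supported input `X`, the mutual information `I(X;Y)` is at most
`N · Cov(f(X), log(f(X)/(1−f(X))))`. -/
theorem stmt_2 {ι : Type*} [Fintype ι] (N : ℕ)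
    (px : ι → ℝ) (hpx : ∀ i, 0 ≤ px i) (hsum : ∑ i, px i = 1)
    (x : ι → ℝ) (f : ℝ → ℝ) (hf : Monotone f)
    (hf01 : ∀ t, f t ∈ Set.Ioo (0:ℝ) 1) :
    let b : ι → ℕ → ℝ := fun i y =>
      (N.choose y : ℝ) * f (x i) ^ y * (1 - f (x i)) ^ (N - y)
    let py : ℕ → ℝ := fun y => ∑ i, px i * b i y
    let h : ι → ℝ := fun i => Real.log (f (x i) / (1 - f (x i)))
    (∑ i, ∑ y ∈ Finset.range (N + 1), px i * b i y * Real.log (b i y / py y))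
      ≤ (N : ℝ) * ((∑ i, px i * (f (x i) * h i))
          - (∑ i, px i * f (x i)) * (∑ i, px i * h i)) :=
  stmt_2_general N px hpx hsum x f hf01
end

section
/- The function α ↦ −α(1−p)log α + α p log p − (1−α+αp) log(1−α+αp) on (0,1), for fixed p ∈ (0,1), attains its maximum at α* = 1/(1 − p + e^{−p log p/(1−p)}), and the maximum value equals H(1/(1+e^{g(p)})) − g(p)/(1+e^{g(p)}), where H(q) = −q log q − (1−q) log(1−q) and g(p) = H(p)/(1−p). -/
/-!
Writing `q = (1 - p) α` for the probability of the output `1`, the mutual information is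
`f_I(α) = H(q) - α H(p) = H(q) - g q`. The map `q ↦ H(q) - g q` is concave on `[0, 1]`, and its
derivative `log ((1 - q) / q) - g` vanishes at `q = 1 / (1 + e^g)`, which is `(1 - p) α*`.
-/

open Real Set

theorem ConcaveOn.isMaxOn_of_hasDerivAt_eq_zero {S : Set ℝ} {f : ℝ → ℝ} {x : ℝ}
    (hf : ConcaveOn ℝ S f) (hx : x ∈ S) (hf' : HasDerivAt f 0 x) : IsMaxOn f S x := by
  intro y hy
  show f y ≤ f x
  rcases lt_trichotomy y x with hyx | rfl | hxy
  · have := hf.le_slope_of_hasDerivAt hy hx hyx hf'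
    rw [slope_def_field, div_nonneg_iff] at this
    rcases this with h | h <;> linarith [h.1, h.2]
  · exact le_rfl
  · have := hf.slope_le_of_hasDerivAt hx hy hxy hf'
    rw [slope_def_field, div_nonpos_iff] at this
    rcases this with h | h <;> linarith [h.1, h.2]

namespace Real

theorem binEntropy_eq_neg_mul_log_sub (q : ℝ) :
    binEntropy q = -q * log q - (1 - q) * log (1 - q) := by
  simp only [binEntropy, log_inv]
  ring

theorem isMaxOn_binEntropy_sub_mul (g : ℝ) :
    IsMaxOn (fun q => binEntropy q - g * q) (Icc 0 1) (1 + exp g)⁻¹ := by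
  have hpos : 0 < 1 + exp g := by positivity
  have hconc : ConcaveOn ℝ (Icc 0 1) (fun q => binEntropy q - g * q) :=
    strictConcave_binEntropy.concaveOn.sub ((LinearMap.mulLeft ℝ g).convexOn (convex_Icc 0 1))
  have hne1 : (1 + exp g)⁻¹ ≠ 1 := by
    rw [Ne, inv_eq_one]
    linarith [exp_pos g]
  have hq1 : 1 - (1 + exp g)⁻¹ = exp g * (1 + exp g)⁻¹ := by
    field_simp
    ring
  refine hconc.isMaxOn_of_hasDerivAt_eq_zero
    ⟨by positivity, inv_le_one_of_one_le₀ (by linarith [exp_pos g])⟩ ?_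
  refine ((hasDerivAt_binEntropy (inv_ne_zero hpos.ne') hne1).sub
    ((hasDerivAt_id _).const_mul g)).congr_deriv ?_
  rw [hq1, log_mul (exp_pos g).ne' (inv_ne_zero hpos.ne'), log_exp]
  ring

noncomputable def zChannelInfo (p α : ℝ) : ℝ :=
  -α * (1 - p) * log α + α * p * log p - (1 - α + α * p) * log (1 - α + α * p)

theorem zChannelInfo_eq_binEntropy_sub (p α : ℝ) :
    zChannelInfo p α = binEntropy ((1 - p) * α) - α * binEntropy p := by
  have hsplit : (1 - p) * α * log ((1 - p) * α) = (1 - p) * α * (log (1 - p) + log α) := by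
    rcases eq_or_ne α 0 with rfl | hα
    · simp
    rcases eq_or_ne (1 - p) 0 with hp | hp
    · simp [hp]
    rw [log_mul hp hα]
  simp only [zChannelInfo, binEntropy_eq_neg_mul_log_sub]
  rw [show 1 - (1 - p) * α = 1 - α + α * p by ring, neg_mul ((1 - p) * α), hsplit]
  ring

theorem one_sub_mul_exp_binEntropy_div {p : ℝ} (hp : p < 1) :
    (1 - p) * exp (binEntropy p / (1 - p)) = exp (-(p * log p) / (1 - p)) := by
  have h1p : 0 < 1 - p := by linarith
  have hg : binEntropy p / (1 - p) = -(p * log p) / (1 - p) - log (1 - p) := by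
    rw [binEntropy_eq_neg_mul_log_sub]
    field_simp
  rw [hg, exp_sub, exp_log h1p, mul_div_cancel₀ _ h1p.ne']

end Real

/-- The Z-channel mutual information `f_I(·,p)` on `(0,1)` attains its maximum at
`α* = 1/(1−p+e^{−p log p/(1−p)})` and the maximum value equals
`H(1/(1+e^{g(p)})) − g(p)/(1+e^{g(p)})` with `H` the binary entropy and
`g(p) = H(p)/(1−p)`. -/
theorem stmt_5 (p : ℝ) (hp : p ∈ Set.Ioo (0:ℝ) 1) :
    let fI : ℝ → ℝ := fun α => -α * (1 - p) * Real.log α + α * p * Real.log p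
      - (1 - α + α * p) * Real.log (1 - α + α * p)
    let H : ℝ → ℝ := fun q => -q * Real.log q - (1 - q) * Real.log (1 - q)
    let g : ℝ := H p / (1 - p)
    let αstar : ℝ := 1 / (1 - p + Real.exp (-(p * Real.log p) / (1 - p)))
    αstar ∈ Set.Ioo (0:ℝ) 1 ∧
    (∀ α ∈ Set.Ioo (0:ℝ) 1, fI α ≤ fI αstar) ∧
    fI αstar = H (1 / (1 + Real.exp g)) - g / (1 + Real.exp g) := by
  obtain ⟨hp0, hp1⟩ := hp
  intro fI H g αstar
  have h1p : 0 < 1 - p := by linarith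
  have hH : H = binEntropy := funext fun q => (binEntropy_eq_neg_mul_log_sub q).symm
  have hfI (α : ℝ) : fI α = binEntropy ((1 - p) * α) - g * ((1 - p) * α) := by
    rw [show fI α = zChannelInfo p α from rfl, zChannelInfo_eq_binEntropy_sub]
    simp only [g, hH]
    field_simp
  have hαstar : (1 - p) * αstar = (1 + exp g)⁻¹ := by
    have : αstar = (1 - p + (1 - p) * exp g)⁻¹ := by
      simp [αstar, g, hH, one_sub_mul_exp_binEntropy_div hp1]
    rw [this]
    field_simp
  have hexp : 1 ≤ exp (-(p * log p) / (1 - p)) :=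
    one_le_exp <| div_nonneg (neg_nonneg.2 <|
      mul_nonpos_of_nonneg_of_nonpos hp0.le (log_nonpos hp0.le hp1.le)) h1p.le
  refine ⟨⟨by positivity, (div_lt_one (by positivity)).2 (by linarith)⟩, fun α hα => ?_, ?_⟩
  · rw [hfI, hfI, hαstar]
    exact isMaxOn_binEntropy_sub_mul g ⟨by nlinarith [hα.1], by nlinarith [hα.1, hα.2]⟩
  · rw [hfI, hαstar, hH, one_div, div_eq_mul_inv]
end

section
/- The capacity of the binary-input Binomial channel under the average constraint E[X] ≤ α_s A is: if α_s ≥ α* = 1/(1−p_c+e^{−p_c log p_c/(1−p_c)}) then C = H(1/(1+e^{g(p_c)})) − g(p_c)/(1+e^{g(p_c)}); otherwise C = f_I(α_s, p_c), where p_c = (c/(A+c))^{N'}. -/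
/-!
Writing `M(α) = 1 - α(1 - p)` for the probability of the output `0`, the objective is
`f(α) = -(1 - p) α log α + α p log p - M(α) log M(α)`, a concave function of `α` since
`x ↦ x log x` is convex. Its tangent lines therefore lie above it, with slope
`f'(α) = (1 - p) (log M(α) - log α) + p log p`, which decreases from `+∞` and vanishes exactly
at `α* = 1 / (1 - p + e^t)`, `t = -p log p / (1 - p)`. Hence the maximum over `[0, α_s]` is attained
at `α*` when `α* ≤ α_s` and at `α_s` otherwise, and at `α*` the value simplifies to
`-log α* - t = log (1 + e^{-g(p)})`, which is also `H(q) - g q` at `q = 1 / (1 + e^g)`.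
-/

open Real Set

lemma mul_log_add_sub_le_mul_log {x y : ℝ} (hx : 0 ≤ x) (hy : 0 < y) :
    x * log y + (x - y) ≤ x * log x := by
  obtain rfl | hx := hx.eq_or_lt
  · simp [hy.le]
  have key := mul_le_mul_of_nonneg_left (self_sub_one_le_mul_log (div_pos hx hy).le) hy.le
  rw [log_div hx.ne' hy.ne'] at key
  field_simp at key
  linarith

/-- The paper's `f_I(α, p)`: the mutual information of the Z-channel that erases the input `A`
to `0` with probability `p`, under the input law `P(X = A) = α`. -/
noncomputable def zChannelMutualInfo (p α : ℝ) : ℝ :=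
  -α * (1 - p) * log α + α * p * log p - (1 - α + α * p) * log (1 - α + α * p)

noncomputable def zChannelMutualInfoDeriv (p α : ℝ) : ℝ :=
  (1 - p) * (log (1 - α + α * p) - log α) + p * log p

noncomputable def optimalInputProb (p : ℝ) : ℝ :=
  1 / (1 - p + exp (-(p * log p) / (1 - p)))

section

variable {p : ℝ}

lemma zChannelMutualInfo_le_tangent {m x : ℝ} (hp : p < 1) (hm : 0 < m)
    (hMm : 0 < 1 - m + m * p) (hx : 0 ≤ x) (hMx : 0 ≤ 1 - x + x * p) :
    zChannelMutualInfo p x ≤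
      zChannelMutualInfo p m + (x - m) * zChannelMutualInfoDeriv p m := by
  have tangent_x := mul_log_add_sub_le_mul_log hx hm
  have tangent_M := mul_log_add_sub_le_mul_log hMx hMm
  unfold zChannelMutualInfo zChannelMutualInfoDeriv
  nlinarith [mul_le_mul_of_nonneg_left tangent_x (sub_nonneg.2 hp.le)]

lemma isGreatest_zChannelMutualInfo_image_Icc {m s : ℝ} (hp : p < 1) (hm : 0 < m)
    (hms : m ≤ s) (hMm : 0 < 1 - m + m * p) (hs : s * (1 - p) ≤ 1)
    (hD : ∀ x ∈ Icc 0 s, (x - m) * zChannelMutualInfoDeriv p m ≤ 0) :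
    IsGreatest (zChannelMutualInfo p '' Icc 0 s) (zChannelMutualInfo p m) := by
  refine ⟨mem_image_of_mem _ ⟨hm.le, hms⟩, ?_⟩
  rintro _ ⟨x, hx, rfl⟩
  have hMx : 0 ≤ 1 - x + x * p := by nlinarith [hx.2]
  linarith [zChannelMutualInfo_le_tangent hp hm hMm hx.1 hMx, hD x hx]

lemma one_sub_add_mul_pos_of_le_optimalInputProb {m : ℝ} (hp : p < 1)
    (hmα : m ≤ optimalInputProb p) : 0 < 1 - m + m * p := by
  have hu := exp_pos (-(p * log p) / (1 - p))
  rw [optimalInputProb, le_div_iff₀ (by linarith)] at hmα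
  nlinarith

lemma optimalInputProb_pos (hp : p < 1) : 0 < optimalInputProb p := by
  unfold optimalInputProb
  have := exp_pos (-(p * log p) / (1 - p))
  exact one_div_pos.2 (by linarith)

lemma one_sub_add_mul_optimalInputProb (hp : p < 1) :
    1 - optimalInputProb p + optimalInputProb p * p =
      exp (-(p * log p) / (1 - p)) * optimalInputProb p := by
  rw [optimalInputProb]
  set u := exp (-(p * log p) / (1 - p))
  have hden : 1 - p + u ≠ 0 := by linarith [exp_pos (-(p * log p) / (1 - p))]
  field_simp
  ring

lemma log_one_sub_add_mul_optimalInputProb (hp : p < 1) :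
    log (1 - optimalInputProb p + optimalInputProb p * p) =
      -(p * log p) / (1 - p) + log (optimalInputProb p) := by
  rw [one_sub_add_mul_optimalInputProb hp, log_mul (exp_pos _).ne' (optimalInputProb_pos hp).ne',
    log_exp]

lemma zChannelMutualInfoDeriv_optimalInputProb (hp : p < 1) :
    zChannelMutualInfoDeriv p (optimalInputProb p) = 0 := by
  have h1p : 1 - p ≠ 0 := by linarith
  rw [zChannelMutualInfoDeriv, log_one_sub_add_mul_optimalInputProb hp]
  field_simp
  ring

lemma zChannelMutualInfoDeriv_nonneg {m : ℝ} (hp : p < 1) (hm : 0 < m)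
    (hmα : m ≤ optimalInputProb p) : 0 ≤ zChannelMutualInfoDeriv p m := by
  set t := -(p * log p) / (1 - p) with ht
  have hlogp : p * log p = -((1 - p) * t) := by
    rw [ht]; field_simp [show 1 - p ≠ 0 by linarith]
  have hexp : exp t * m ≤ 1 - m + m * p := by
    rw [optimalInputProb, le_div_iff₀ (by linarith [exp_pos t])] at hmα
    linarith
  have hlog : t + log m ≤ log (1 - m + m * p) := by
    rw [← log_exp t, ← log_mul (exp_pos t).ne' hm.ne']
    exact log_le_log (by positivity) hexp
  rw [zChannelMutualInfoDeriv, hlogp]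
  nlinarith

lemma zChannelMutualInfo_optimalInputProb (hp : p < 1) :
    zChannelMutualInfo p (optimalInputProb p) =
      log (1 + exp (-(binEntropy p / (1 - p)))) := by
  rw [zChannelMutualInfo, log_one_sub_add_mul_optimalInputProb hp,
    one_sub_add_mul_optimalInputProb hp]
  have hα := one_sub_add_mul_optimalInputProb hp
  set t := -(p * log p) / (1 - p) with ht
  set α := optimalInputProb p
  have hαpos : 0 < α := optimalInputProb_pos hp
  replace hα : α * (1 - p + exp t) = 1 := by linarith
  have h1p : 0 < 1 - p := by linarith
  have hlogp : p * log p = -((1 - p) * t) := by rw [ht]; field_simp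
  have hg : -(binEntropy p / (1 - p)) = log (1 - p) - t := by
    rw [binEntropy_eq_negMulLog_add_negMulLog_one_sub, negMulLog, negMulLog, ht]
    field_simp
    ring
  have hvalue : log (1 + (1 - p) * exp (-t)) = -log α - t := by
    have : 1 + (1 - p) * exp (-t) = α⁻¹ * exp (-t) := by
      rw [exp_neg]
      field_simp
      linear_combination hα
    rw [this, log_mul (inv_pos.2 hαpos).ne' (exp_pos _).ne', log_inv, log_exp]
    ring
  rw [hg, exp_sub, exp_log h1p, div_eq_mul_inv, ← exp_neg, hvalue]
  linear_combination α * hlogp + (-(log α) - t) * hα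

end

lemma binEntropy_one_div_one_add_exp_sub (g : ℝ) :
    binEntropy (1 / (1 + exp g)) - g / (1 + exp g) = log (1 + exp (-g)) := by
  have hpos : 0 < 1 + exp g := by positivity
  have hcompl : 1 - 1 / (1 + exp g) = exp g / (1 + exp g) := by field_simp; ring
  have hneg : 1 + exp (-g) = (1 + exp g) / exp g := by rw [exp_neg]; field_simp; ring
  rw [binEntropy_eq_negMulLog_add_negMulLog_one_sub, hcompl, negMulLog, negMulLog, hneg,
    log_div hpos.ne' (exp_pos g).ne', log_div (exp_pos g).ne' hpos.ne', one_div, log_inv, log_exp]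
  field_simp
  ring

/-- Capacity of the binary-input Binomial channel (`X ∈ {0,A}`,
`Y|X=x ~ Binomial(N, x/(x+c))`, so crossover `p_c = (c/(A+c))^N`) under the
average constraint `α ≤ α_s`: if `α_s ≥ α*` then
`C = H(1/(1+e^{g(p_c)})) − g(p_c)/(1+e^{g(p_c)})`, otherwise `C = f_I(α_s, p_c)`. -/
theorem stmt_8 (N : ℕ) (hN : 0 < N) (A c αs : ℝ) (hA : 0 < A) (hc : 0 < c)
    (hαs : αs ∈ Set.Ioc (0:ℝ) 1) :
    let pc : ℝ := (c / (A + c)) ^ N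
    let fI : ℝ → ℝ := fun α => -α * (1 - pc) * Real.log α + α * pc * Real.log pc
      - (1 - α + α * pc) * Real.log (1 - α + α * pc)
    let H : ℝ → ℝ := fun q => -q * Real.log q - (1 - q) * Real.log (1 - q)
    let g : ℝ := H pc / (1 - pc)
    let αstar : ℝ := 1 / (1 - pc + Real.exp (-(pc * Real.log pc) / (1 - pc)))
    (αstar ≤ αs →
      sSup (fI '' Set.Icc 0 αs) = H (1 / (1 + Real.exp g)) - g / (1 + Real.exp g)) ∧
    (αs < αstar → sSup (fI '' Set.Icc 0 αs) = fI αs) := by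
  intro pc fI H g αstar
  obtain ⟨hs0, hs1⟩ := hαs
  have hratio : 0 < c / (A + c) := div_pos hc (by linarith)
  have hp0 : 0 < pc := pow_pos hratio N
  have hp1 : pc < 1 := pow_lt_one₀ hratio.le ((div_lt_one (by linarith)).2 (by linarith)) hN.ne'
  have hfI : fI = zChannelMutualInfo pc := rfl
  have hH : H = binEntropy := by
    ext q; simp only [H, binEntropy_eq_negMulLog_add_negMulLog_one_sub, negMulLog]; ring
  have hg : g = binEntropy pc / (1 - pc) := by simp only [g, hH]
  have hs : αs * (1 - pc) ≤ 1 := by nlinarith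
  rw [hfI]
  refine ⟨fun hle => ?_, fun hlt => ?_⟩
  · have hmax := isGreatest_zChannelMutualInfo_image_Icc hp1 (optimalInputProb_pos hp1) hle
      (one_sub_add_mul_pos_of_le_optimalInputProb hp1 le_rfl) hs
      (by simp [zChannelMutualInfoDeriv_optimalInputProb hp1])
    rw [hmax.csSup_eq, zChannelMutualInfo_optimalInputProb hp1, hH,
      binEntropy_one_div_one_add_exp_sub, hg]
  · have hD := zChannelMutualInfoDeriv_nonneg hp1 hs0 hlt.le
    have hmax := isGreatest_zChannelMutualInfo_image_Icc hp1 hs0 le_rfl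
      (one_sub_add_mul_pos_of_le_optimalInputProb hp1 hlt.le) hs
      fun x hx => mul_nonpos_of_nonpos_of_nonneg (by linarith [hx.2]) hD
    exact hmax.csSup_eq
end

section
/- For the two-user DLSR interference channel with binary inputs and no noise, the rate R₁ = I(X₁;Y₁) when treating interference as noise equals −log α₁ + α₁ q log q − α₁((1−α₁)/α₁ + q) log((1−α₁)/α₁ + q), where q = (1−α₂)p_{c10} + α₂ p_{c11}, P(X₁=A₁)=α₁, P(X₂=A₂)=α₂, p_{c10} = (c/(A₁+c))^{nN}, p_{c11} = ((A₂+c)/(A₁+A₂+c))^{nN}. -/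
/-!
Given `X₁ = 0` the output is `0`, so `Y₁` is the mixture `α₁ M + (1 - α₁) δ₀` of the output law
`M` under `X₁ = A₁` with a point mass. Off `0` the mixture is `α₁ M`, and
`negMulLog (α₁ m) = m · negMulLog α₁ + α₁ · negMulLog m` cancels these terms against `α₁ H(M)`,
leaving only the mass `q = M 0` at `0`.
-/

open Finset Real

theorem sum_negMulLog_mixture_ite_sub {ι : Type*} [DecidableEq ι] {s : Finset ι} {i₀ : ι}
    (hi₀ : i₀ ∈ s) {M : ι → ℝ} (hM : ∑ i ∈ s, M i = 1) (a : ℝ) :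
    ∑ i ∈ s, negMulLog (a * M i + (1 - a) * if i = i₀ then 1 else 0)
        - a * ∑ i ∈ s, negMulLog (M i)
      = negMulLog (a * M i₀ + (1 - a)) + (1 - M i₀) * negMulLog a - a * negMulLog (M i₀) := by
  have hrest : ∑ i ∈ s.erase i₀, M i = 1 - M i₀ := by
    rw [← hM, ← add_sum_erase s M hi₀]; ring
  have hoff : ∑ i ∈ s.erase i₀, negMulLog (a * M i + (1 - a) * if i = i₀ then 1 else 0)
      = ∑ i ∈ s.erase i₀, (M i * negMulLog a + a * negMulLog (M i)) :=
    sum_congr rfl fun i hi => by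
      rw [if_neg (ne_of_mem_erase hi), mul_zero, add_zero, negMulLog_mul]
  rw [← add_sum_erase s _ hi₀, ← add_sum_erase s _ hi₀, hoff, sum_add_distrib, ← sum_mul,
    ← mul_sum, hrest, if_pos rfl, mul_one]
  ring

theorem negMulLog_zChannel_eq {a : ℝ} (ha : a ≠ 0) (q : ℝ) :
    negMulLog (a * q + (1 - a)) + (1 - q) * negMulLog a - a * negMulLog q
      = -log a + a * q * log q - a * ((1 - a) / a + q) * log ((1 - a) / a + q) := by
  have hrescale : (1 - a) / a + q = (a * q + (1 - a)) / a := by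
    field_simp; ring
  have hlog : ∀ t : ℝ, t * log (t / a) = t * log t - t * log a := fun t => by
    rcases eq_or_ne t 0 with rfl | ht
    · simp
    · rw [log_div ht ha]; ring
  rw [hrescale, mul_div_cancel₀ _ ha, hlog]
  simp only [negMulLog]
  ring

theorem stmt_19_general (A1 A2 c : ℝ) (nN : ℕ)
    (α1 α2 : ℝ) (hα1 : α1 ∈ Set.Ioo (0:ℝ) 1)
    (W0 W1 : ℕ → ℝ)
    (hW0sum : ∑ y ∈ Finset.range (nN + 1), W0 y = 1)
    (hW1sum : ∑ y ∈ Finset.range (nN + 1), W1 y = 1)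
    (hW00 : W0 0 = (c / (A1 + c)) ^ nN)
    (hW10 : W1 0 = ((A2 + c) / (A1 + A2 + c)) ^ nN) :
    let M : ℕ → ℝ := fun y => (1 - α2) * W0 y + α2 * W1 y
    let Pm : ℕ → ℝ := fun y => α1 * M y + (1 - α1) * (if y = 0 then 1 else 0)
    let q : ℝ := (1 - α2) * (c / (A1 + c)) ^ nN
      + α2 * ((A2 + c) / (A1 + A2 + c)) ^ nN
    (∑ y ∈ Finset.range (nN + 1), Real.negMulLog (Pm y))
        - α1 * ∑ y ∈ Finset.range (nN + 1), Real.negMulLog (M y)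
      = -Real.log α1 + α1 * q * Real.log q
          - α1 * ((1 - α1) / α1 + q) * Real.log ((1 - α1) / α1 + q) := by
  intro M Pm q
  have hM0 : M 0 = q := by simp only [M, q, hW00, hW10]
  have hMsum : ∑ y ∈ range (nN + 1), M y = 1 := by
    simp only [M, sum_add_distrib, ← mul_sum, hW0sum, hW1sum]; ring
  rw [sum_negMulLog_mixture_ite_sub (mem_range.2 nN.succ_pos) hMsum, hM0]
  exact negMulLog_zChannel_eq hα1.1.ne' q

/-- Two-user DLSR interference channel with binary inputs and no noise, treating
interference as noise.  Output `Y₁ = 0` surely if `X₁ = 0`; given `X₁ = A₁` the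
output law is `W₀` (if `x₂ = 0`) or `W₁` (if `x₂ = A₂`), with
`W₀(0) = p_{c10} = (c/(A₁+c))^{nN}` and `W₁(0) = p_{c11} = ((A₂+c)/(A₁+A₂+c))^{nN}`.
Then `R₁ = I(X₁;Y₁) = H(Y₁) − H(Y₁|X₁)` equals
`−log α₁ + α₁ q log q − α₁((1−α₁)/α₁ + q) log((1−α₁)/α₁ + q)` with
`q = (1−α₂)p_{c10} + α₂ p_{c11}`. -/
theorem stmt_19 (A1 A2 c : ℝ) (nN : ℕ) (hA1 : 0 < A1) (hA2 : 0 < A2)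
    (hc : 0 < c) (hn : 0 < nN)
    (α1 α2 : ℝ) (hα1 : α1 ∈ Set.Ioo (0:ℝ) 1) (hα2 : α2 ∈ Set.Ioo (0:ℝ) 1)
    (W0 W1 : ℕ → ℝ) (hW0 : ∀ y, 0 ≤ W0 y) (hW1 : ∀ y, 0 ≤ W1 y)
    (hW0sum : ∑ y ∈ Finset.range (nN + 1), W0 y = 1)
    (hW1sum : ∑ y ∈ Finset.range (nN + 1), W1 y = 1)
    (hW00 : W0 0 = (c / (A1 + c)) ^ nN)
    (hW10 : W1 0 = ((A2 + c) / (A1 + A2 + c)) ^ nN) :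
    let M : ℕ → ℝ := fun y => (1 - α2) * W0 y + α2 * W1 y
    let Pm : ℕ → ℝ := fun y => α1 * M y + (1 - α1) * (if y = 0 then 1 else 0)
    let q : ℝ := (1 - α2) * (c / (A1 + c)) ^ nN
      + α2 * ((A2 + c) / (A1 + A2 + c)) ^ nN
    (∑ y ∈ Finset.range (nN + 1), Real.negMulLog (Pm y))
        - α1 * ∑ y ∈ Finset.range (nN + 1), Real.negMulLog (M y)
      = -Real.log α1 + α1 * q * Real.log q
          - α1 * ((1 - α1) / α1 + q) * Real.log ((1 - α1) / α1 + q) :=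
  stmt_19_general A1 A2 c nN α1 α2 hα1 W0 W1 hW0sum hW1sum hW00 hW10
end
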